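/- arXiv:2605.06973 — 2 statements merged into one kernel-verified Lean document; each statement's English description precedes it below -/
import Mathlib

section
/- If t ↦ σ_t is a C¹ curve of positive definite Hermitian matrices on a finite-dimensional complex Hilbert space, then d/dt log σ_t = T_{σ_t}(σ̇_t), where T_σ(X) = ∫₀^∞ (σ + s·1)⁻¹ X (σ + s·1)⁻¹ ds. -/
/-!
For positive definite `A` one has `log A = ∫₀^∞ ((1 + s)⁻¹ - (A + s)⁻¹) ds`: on the eigenbasis this
is the scalar identity `∫₀^∞ ((1 + s)⁻¹ - (λ + s)⁻¹) ds = log λ`. The derivative of `(σ_u + s)⁻¹` is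
`-(σ_u + s)⁻¹ σ̇_u (σ_u + s)⁻¹`, and differentiating under the integral sign is justified by a bound
`‖(σ_u + s)⁻¹‖ ≤ K (1 + s)⁻¹` that is uniform for `u` near `t`: it holds at `u = t` by the spectral
theorem, and the resolvent identity carries it over to every `u` with `σ_u` close to `σ_t`.
-/

open Matrix MeasureTheory
open scoped ComplexOrder

/-- `T_σ(X) = ∫₀^∞ (σ + s·1)⁻¹ X (σ + s·1)⁻¹ ds`, defined entrywise. -/
noncomputable def Tmap {n : ℕ} (σ X : Matrix (Fin n) (Fin n) ℂ) : Matrix (Fin n) (Fin n) ℂ :=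
  Matrix.of fun i j =>
    ∫ s in Set.Ioi (0 : ℝ),
      ((σ + (s : ℂ) • (1 : Matrix (Fin n) (Fin n) ℂ))⁻¹ * X
        * (σ + (s : ℂ) • (1 : Matrix (Fin n) (Fin n) ℂ))⁻¹) i j

/-- Matrix logarithm of a Hermitian matrix via the continuous functional calculus. -/
noncomputable def mlog {n : ℕ} (M : Matrix (Fin n) (Fin n) ℂ) : Matrix (Fin n) (Fin n) ℂ :=
  cfc Real.log M

open Set Filter Topology
open scoped MatrixOrder

namespace Real

lemma tendsto_log_add_sub_log_add (a b : ℝ) :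
    Tendsto (fun s => log (a + s) - log (b + s)) atTop (𝓝 0) := by
  have h := (tendsto_log_comp_add_sub_log a).sub (tendsto_log_comp_add_sub_log b)
  simp only [sub_self, sub_sub_sub_cancel_right, add_comm _ a, add_comm _ b] at h
  exact h

lemma hasDerivAt_log_add_sub_log_add {a b x : ℝ} (ha : 0 < a + x) (hb : 0 < b + x) :
    HasDerivAt (fun s => log (a + s) - log (b + s)) ((a + x)⁻¹ - (b + x)⁻¹) x := by
  have hlog {c : ℝ} (hc : 0 < c + x) : HasDerivAt (fun s => log (c + s)) (c + x)⁻¹ x := by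
    simpa using ((hasDerivAt_id x).const_add c).log hc.ne'
  exact (hlog ha).sub (hlog hb)

lemma integrableOn_inv_add_sub_inv_add {a b : ℝ} (ha : 0 < a) (hb : 0 < b) :
    IntegrableOn (fun s => (a + s)⁻¹ - (b + s)⁻¹) (Ioi 0) := by
  wlog hab : a ≤ b generalizing a b
  · simpa only [Pi.neg_def, neg_sub] using (this hb ha (le_of_not_ge hab)).neg
  refine integrableOn_Ioi_deriv_of_nonneg' (g := fun s => log (a + s) - log (b + s))
    (fun x hx => hasDerivAt_log_add_sub_log_add (by linarith [mem_Ici.1 hx])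
      (by linarith [mem_Ici.1 hx])) (fun x (hx : 0 < x) => ?_) (tendsto_log_add_sub_log_add a b)
  exact sub_nonneg.2 (inv_anti₀ (by linarith) (by linarith))

lemma integral_inv_add_sub_inv_add {a b : ℝ} (ha : 0 < a) (hb : 0 < b) :
    ∫ s in Ioi 0, ((a + s)⁻¹ - (b + s)⁻¹) = log b - log a := by
  rw [integral_Ioi_of_hasDerivAt_of_tendsto' (fun x hx => hasDerivAt_log_add_sub_log_add
      (by linarith [mem_Ici.1 hx]) (by linarith [mem_Ici.1 hx]))
    (integrableOn_inv_add_sub_inv_add ha hb) (tendsto_log_add_sub_log_add a b)]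
  simp

end Real

section NormedRing
variable {R : Type*} [NormedRing R]

lemma norm_ringInverse_le_two_mul {a b : R} (ha : IsUnit a) (hb : IsUnit b)
    (h : ‖Ring.inverse a‖ * ‖b - a‖ ≤ 1 / 2) : ‖Ring.inverse b‖ ≤ 2 * ‖Ring.inverse a‖ := by
  have resolvent : Ring.inverse b = Ring.inverse a - Ring.inverse a * (b - a) * Ring.inverse b := by
    rw [← Ring.inverse_sub_inverse ⟨fun _ => hb, fun _ => ha⟩, sub_sub_cancel]
  have : ‖Ring.inverse b‖ ≤ ‖Ring.inverse a‖ + ‖Ring.inverse a‖ * ‖b - a‖ * ‖Ring.inverse b‖ :=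
    calc ‖Ring.inverse b‖ = ‖Ring.inverse a - Ring.inverse a * (b - a) * Ring.inverse b‖ := by
          rw [← resolvent]
      _ ≤ _ := (norm_sub_le _ _).trans (add_le_add le_rfl norm_mul₃_le)
  nlinarith [norm_nonneg (Ring.inverse b)]

variable {𝕜 : Type*} [NontriviallyNormedField 𝕜] [NormedAlgebra 𝕜 R] [HasSummableGeomSeries R]

theorem HasDerivAt.ringInverse {f : 𝕜 → R} {f' : R} {x : 𝕜} (hf : HasDerivAt f f' x)
    (hx : IsUnit (f x)) :
    HasDerivAt (fun u => Ring.inverse (f u)) (-(Ring.inverse (f x) * f' * Ring.inverse (f x))) x := by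
  obtain ⟨u, hu⟩ := hx
  have h : HasFDerivAt Ring.inverse _ (f x) := hu ▸ hasFDerivAt_ringInverse (𝕜 := 𝕜) u
  rw [← hu, Ring.inverse_unit]
  exact h.comp_hasDerivAt x hf

end NormedRing

namespace Matrix

lemma hasDerivAt_iff_forall_hasDerivAt_apply {l m 𝕜 E : Type*} [Fintype m]
    [NontriviallyNormedField 𝕜] [NormedAddCommGroup E] [NormedSpace 𝕜 E]
    {f : 𝕜 → Matrix l m E} {f' : Matrix l m E} {x : 𝕜} :
    HasDerivAt f f' x ↔ ∀ i j, HasDerivAt (fun u => f u i j) (f' i j) x :=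
  hasDerivAt_pi.trans (forall_congr' fun _ => hasDerivAt_pi)

variable {n : Type*} [DecidableEq n] {A : Matrix n n ℂ} {s : ℝ}

lemma PosSemidef.posDef_add_smul_one (hA : A.PosSemidef) (hs : 0 < s) :
    (A + (s : ℂ) • 1).PosDef :=
  PosDef.posSemidef_add hA (PosDef.one.smul (by exact_mod_cast hs))

variable [Fintype n]

lemma IsHermitian.cfc_apply (hA : A.IsHermitian) (f : ℝ → ℝ) (i j : n) :
    cfc f A i j = ∑ k, (f (hA.eigenvalues k) : ℂ) *
      (hA.eigenvectorUnitary.1 i k * star (hA.eigenvectorUnitary.1 j k)) := by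
  rw [hA.cfc_eq, IsHermitian.cfc, Unitary.conjStarAlgAut_apply, mul_apply]
  refine Finset.sum_congr rfl fun k _ => ?_
  simp only [mul_diagonal, star_apply, Function.comp_apply, RCLike.ofReal_eq_complex_ofReal]
  ring

lemma IsHermitian.integrable_cfc_apply (hA : A.IsHermitian) {α : Type*} [MeasurableSpace α]
    {μ : Measure α} {f : α → ℝ → ℝ} (hf : ∀ k, Integrable (fun a => f a (hA.eigenvalues k)) μ)
    (i j : n) : Integrable (fun a => cfc (f a) A i j) μ := by
  simp only [hA.cfc_apply]
  exact integrable_finsetSum _ fun k _ => (hf k).ofReal.mul_const _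

lemma IsHermitian.integral_cfc_apply (hA : A.IsHermitian) {α : Type*} [MeasurableSpace α]
    {μ : Measure α} {f : α → ℝ → ℝ} (hf : ∀ k, Integrable (fun a => f a (hA.eigenvalues k)) μ)
    (i j : n) : ∫ a, cfc (f a) A i j ∂μ = cfc (fun x => ∫ a, f a x ∂μ) A i j := by
  simp only [hA.cfc_apply]
  rw [integral_finsetSum _ fun k _ => (hf k).ofReal.mul_const _]
  simp only [integral_mul_const, integral_complex_ofReal]

lemma PosSemidef.inv_add_smul_one_eq_cfc (hA : A.PosSemidef) (hs : 0 < s) :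
    (A + (s : ℂ) • 1)⁻¹ = cfc (fun x => (x + s)⁻¹) A := by
  have hpos : ∀ x ∈ spectrum ℝ A, 0 < x + s := fun x hx =>
    add_pos_of_nonneg_of_pos (spectrum_nonneg_of_nonneg hA.nonneg hx) hs
  have hshift : A + (s : ℂ) • 1 = cfc (fun x => x + s) A := by
    rw [cfc_add .., cfc_id' .., cfc_const .., Algebra.algebraMap_eq_smul_one, Complex.coe_smul]
  refine inv_eq_right_inv ?_
  rw [hshift, ← cfc_mul (fun x => x + s) (fun x => (x + s)⁻¹) A (by fun_prop)
    ((continuousOn_id.add continuousOn_const).inv₀ fun x hx => (hpos x hx).ne'), ← cfc_one ℝ A]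
  exact cfc_congr fun x hx => mul_inv_cancel₀ (hpos x hx).ne'

noncomputable def logIntegrand (A : Matrix n n ℂ) (s : ℝ) : Matrix n n ℂ :=
  (1 + s)⁻¹ • 1 - (A + (s : ℂ) • 1)⁻¹

lemma PosSemidef.logIntegrand_eq_cfc (hA : A.PosSemidef) (hs : 0 < s) :
    logIntegrand A s = cfc (fun x => (1 + s)⁻¹ - (x + s)⁻¹) A := by
  have hpos : ∀ x ∈ spectrum ℝ A, x + s ≠ 0 := fun x hx =>
    (add_pos_of_nonneg_of_pos (spectrum_nonneg_of_nonneg hA.nonneg hx) hs).ne'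
  rw [logIntegrand, cfc_sub (fun _ => (1 + s)⁻¹) (fun x => (x + s)⁻¹) A continuousOn_const
      ((continuousOn_id.add continuousOn_const).inv₀ hpos),
    cfc_const .., hA.inv_add_smul_one_eq_cfc hs, Algebra.algebraMap_eq_smul_one]

lemma PosDef.integrableOn_logIntegrand_apply (hA : A.PosDef) (i j : n) :
    IntegrableOn (fun s => logIntegrand A s i j) (Ioi 0) := by
  refine IntegrableOn.congr_fun (hA.1.integrable_cfc_apply (μ := volume.restrict (Ioi 0))
    (f := fun s x => (1 + s)⁻¹ - (x + s)⁻¹)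
    (fun k => Real.integrableOn_inv_add_sub_inv_add one_pos (hA.eigenvalues_pos k)) i j)
    (fun s hs => ?_) measurableSet_Ioi
  rw [hA.posSemidef.logIntegrand_eq_cfc hs]

section Operator
open scoped Matrix.Norms.Operator

lemma norm_apply_le_linfty_opNorm {l m E : Type*} [Fintype l] [Fintype m]
    [SeminormedAddCommGroup E] (B : Matrix l m E) (i : l) (j : m) : ‖B i j‖ ≤ ‖B‖ := by
  rw [linfty_opNorm_def]
  exact_mod_cast (Finset.single_le_sum (fun _ _ => zero_le) (Finset.mem_univ j)).trans
    (Finset.le_sup (f := fun i => ∑ j, ‖B i j‖₊) (Finset.mem_univ i))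

theorem _root_.HasDerivAt.matrix_inv {𝕜 : Type*} [NontriviallyNormedField 𝕜] [NormedAlgebra 𝕜 ℂ]
    {f : 𝕜 → Matrix n n ℂ} {f' : Matrix n n ℂ} {x : 𝕜} (hf : HasDerivAt f f' x)
    (hx : IsUnit (f x)) :
    HasDerivAt (fun u => (f u)⁻¹) (-((f x)⁻¹ * f' * (f x)⁻¹)) x := by
  simp only [nonsing_inv_eq_ringInverse]
  exact hf.ringInverse hx

lemma hasDerivAt_logIntegrand {σ : ℝ → Matrix n n ℂ} {σ' : Matrix n n ℂ} {u : ℝ}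
    (hσ : HasDerivAt σ σ' u) (hs : IsUnit (σ u + (s : ℂ) • 1)) :
    HasDerivAt (fun v => logIntegrand (σ v) s)
      ((σ u + (s : ℂ) • 1)⁻¹ * σ' * (σ u + (s : ℂ) • 1)⁻¹) u := by
  have h := ((hσ.add_const ((s : ℂ) • 1)).matrix_inv hs).const_sub ((1 + s)⁻¹ • (1 : Matrix n n ℂ))
  rw [neg_neg] at h
  exact h

lemma PosSemidef.continuousOn_inv_add_smul_one (hA : A.PosSemidef) :
    ContinuousOn (fun s : ℝ => (A + (s : ℂ) • 1)⁻¹) (Ioi 0) := by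
  intro s hs
  simp only [nonsing_inv_eq_ringInverse]
  exact ((NormedRing.inverse_continuousAt (hA.posDef_add_smul_one hs).isUnit.unit).comp_of_eq
    (by fun_prop : Continuous fun s : ℝ => A + (s : ℂ) • 1).continuousAt
    (IsUnit.unit_spec _).symm).continuousWithinAt

lemma PosSemidef.continuousOn_logIntegrand (hA : A.PosSemidef) :
    ContinuousOn (logIntegrand A) (Ioi 0) :=
  (((continuousOn_const.add continuousOn_id).inv₀ fun s (hs : 0 < s) =>
    (add_pos one_pos hs).ne').smul continuousOn_const).sub hA.continuousOn_inv_add_smul_one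

lemma PosDef.exists_norm_inv_add_smul_one_le (hA : A.PosDef) :
    ∃ K, 0 ≤ K ∧ ∀ s : ℝ, 0 < s → ‖(A + (s : ℂ) • 1)⁻¹‖ ≤ K * (1 + s)⁻¹ := by
  set U : Matrix n n ℂ := hA.1.eigenvectorUnitary.1
  set C := 1 + ∑ k, (hA.1.eigenvalues k)⁻¹
  have hev := hA.eigenvalues_pos
  have hC1 : 1 ≤ C := le_add_of_nonneg_right (Finset.sum_nonneg fun k _ => (inv_pos.2 (hev k)).le)
  have hCev (k : n) : 1 ≤ C * hA.1.eigenvalues k := by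
    rw [← inv_le_iff_one_le_mul₀ (hev k)]
    exact (Finset.single_le_sum (fun k _ => (inv_pos.2 (hev k)).le) (Finset.mem_univ k)).trans
      (le_add_of_nonneg_left zero_le_one)
  refine ⟨‖U‖ * ‖star U‖ * C, by positivity, fun s hs => ?_⟩
  set D : Matrix n n ℂ := diagonal (RCLike.ofReal ∘ (fun x => (x + s)⁻¹) ∘ hA.1.eigenvalues)
  have hD : ‖D‖ ≤ C * (1 + s)⁻¹ := by
    rw [linfty_opNorm_diagonal]
    refine (pi_norm_le_iff_of_nonneg (by positivity)).2 fun k => ?_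
    have hk := hev k
    rw [Function.comp_apply, Function.comp_apply, RCLike.norm_ofReal, abs_of_pos (by positivity),
      ← div_eq_mul_inv, le_div_iff₀ (by positivity), inv_mul_le_iff₀ (by positivity)]
    nlinarith [hCev k]
  rw [hA.posSemidef.inv_add_smul_one_eq_cfc hs, hA.1.cfc_eq, IsHermitian.cfc,
    Unitary.conjStarAlgAut_apply]
  calc ‖U * D * star U‖ ≤ ‖U‖ * ‖D‖ * ‖star U‖ := norm_mul₃_le
    _ ≤ ‖U‖ * (C * (1 + s)⁻¹) * ‖star U‖ := by gcongr
    _ = ‖U‖ * ‖star U‖ * C * (1 + s)⁻¹ := by ring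

lemma eventually_norm_inv_add_smul_one_le {X : Type*} [TopologicalSpace X] {σ : X → Matrix n n ℂ}
    {t : X} (hσ : ContinuousAt σ t) (hpos : ∀ᶠ u in 𝓝 t, (σ u).PosDef) :
    ∃ K, ∀ᶠ u in 𝓝 t, ∀ s : ℝ, 0 < s → ‖(σ u + (s : ℂ) • 1)⁻¹‖ ≤ K * (1 + s)⁻¹ := by
  obtain ⟨K, hK0, hK⟩ := hpos.self_of_nhds.exists_norm_inv_add_smul_one_le
  refine ⟨2 * K, ?_⟩
  have hclose : ∀ᶠ u in 𝓝 t, K * ‖σ u - σ t‖ < 1 / 2 := by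
    have h : Tendsto (fun u => K * ‖σ u - σ t‖) (𝓝 t) (𝓝 0) := by
      simpa using ((hσ.sub (continuousAt_const (y := σ t))).norm.const_mul K).tendsto
    exact h.eventually_lt_const (by norm_num)
  filter_upwards [hpos, hclose] with u hu hclose s hs
  have hRt := hK s hs
  simp only [nonsing_inv_eq_ringInverse] at hRt ⊢
  calc _ ≤ 2 * ‖Ring.inverse (σ t + (s : ℂ) • 1)‖ := by
        refine norm_ringInverse_le_two_mul
          (hpos.self_of_nhds.posSemidef.posDef_add_smul_one hs).isUnit
          (hu.posSemidef.posDef_add_smul_one hs).isUnit ?_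
        rw [add_sub_add_right_eq_sub]
        refine le_trans ?_ hclose.le
        gcongr
        exact hRt.trans (mul_le_of_le_one_right hK0 (inv_le_one_of_one_le₀ (by linarith)))
    _ ≤ 2 * K * (1 + s)⁻¹ := by rw [mul_assoc]; gcongr

theorem hasDerivAt_integral_logIntegrand_apply {σ σ' : ℝ → Matrix n n ℂ} {t : ℝ}
    (hσ : ∀ᶠ u in 𝓝 t, HasDerivAt σ (σ' u) u) (hσ' : ContinuousAt σ' t)
    (hpos : ∀ᶠ u in 𝓝 t, (σ u).PosDef) (i j : n) :
    HasDerivAt (fun u => ∫ s in Ioi 0, logIntegrand (σ u) s i j)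
      (∫ s in Ioi (0 : ℝ), ((σ t + (s : ℂ) • 1)⁻¹ * σ' t * (σ t + (s : ℂ) • 1)⁻¹) i j) t := by
  obtain ⟨K, hK⟩ := eventually_norm_inv_add_smul_one_le hσ.self_of_nhds.continuousAt hpos
  have hσ'_bdd : ∀ᶠ u in 𝓝 t, ‖σ' u‖ < ‖σ' t‖ + 1 :=
    hσ'.norm.eventually_lt_const (lt_add_one _)
  obtain ⟨ε, hε, hball⟩ :=
    Metric.eventually_nhds_iff_ball.1 (hσ.and (hpos.and (hK.and hσ'_bdd)))
  refine (hasDerivAt_integral_of_dominated_loc_of_deriv_le (Metric.ball_mem_nhds t hε)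
    (F := fun u s => logIntegrand (σ u) s i j)
    (F' := fun u s => ((σ u + (s : ℂ) • 1)⁻¹ * σ' u * (σ u + (s : ℂ) • 1)⁻¹) i j)
    (bound := fun s => K ^ 2 * (‖σ' t‖ + 1) * (1 + s ^ 2)⁻¹) ?meas ?int ?meas' ?bound ?bint
    ?diff).2
  case meas =>
    filter_upwards [hpos] with u hu
    exact ((continuous_id.matrix_elem i j).comp_continuousOn
      hu.posSemidef.continuousOn_logIntegrand).aestronglyMeasurable measurableSet_Ioi
  case int => exact hpos.self_of_nhds.integrableOn_logIntegrand_apply i j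
  case meas' =>
    have hR := hpos.self_of_nhds.posSemidef.continuousOn_inv_add_smul_one
    exact ((continuous_id.matrix_elem i j).comp_continuousOn
      ((hR.mul continuousOn_const).mul hR)).aestronglyMeasurable measurableSet_Ioi
  case bint => exact integrable_inv_one_add_sq.integrableOn.const_mul _
  case bound =>
    filter_upwards [ae_restrict_mem measurableSet_Ioi] with s (hs : 0 < s) u hu
    obtain ⟨-, -, hKu, hσ'u⟩ := hball u hu
    have hR := hKu s hs
    have hK0 : 0 ≤ K * (1 + s)⁻¹ := (norm_nonneg _).trans hR
    calc _ ≤ ‖(σ u + (s : ℂ) • 1)⁻¹ * σ' u * (σ u + (s : ℂ) • 1)⁻¹‖ :=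
          norm_apply_le_linfty_opNorm _ i j
      _ ≤ ‖(σ u + (s : ℂ) • 1)⁻¹‖ * ‖σ' u‖ * ‖(σ u + (s : ℂ) • 1)⁻¹‖ := norm_mul₃_le
      _ ≤ K * (1 + s)⁻¹ * (‖σ' t‖ + 1) * (K * (1 + s)⁻¹) := by gcongr
      _ = K ^ 2 * (‖σ' t‖ + 1) * ((1 + s) ^ 2)⁻¹ := by rw [← inv_pow]; ring
      _ ≤ K ^ 2 * (‖σ' t‖ + 1) * (1 + s ^ 2)⁻¹ := by gcongr; nlinarith
  case diff =>
    filter_upwards [ae_restrict_mem measurableSet_Ioi] with s (hs : 0 < s) u hu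
    obtain ⟨hd, hp, -, -⟩ := hball u hu
    exact hasDerivAt_iff_forall_hasDerivAt_apply.1
      (hasDerivAt_logIntegrand hd (hp.posSemidef.posDef_add_smul_one hs).isUnit) i j

end Operator

end Matrix

lemma Matrix.PosDef.mlog_apply_eq_integral {n : ℕ} {A : Matrix (Fin n) (Fin n) ℂ}
    (hA : A.PosDef) (i j : Fin n) : mlog A i j = ∫ s in Ioi 0, logIntegrand A s i j := by
  have hlog : (spectrum ℝ A).EqOn (fun x => ∫ s in Ioi 0, ((1 + s)⁻¹ - (x + s)⁻¹)) Real.log :=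
    fun x hx => by
      dsimp only
      rw [Real.integral_inv_add_sub_inv_add one_pos (hA.isStrictlyPositive.spectrum_pos hx),
        Real.log_one, sub_zero]
  rw [setIntegral_congr_fun measurableSet_Ioi fun s hs => by
      rw [hA.posSemidef.logIntegrand_eq_cfc hs],
    hA.1.integral_cfc_apply (f := fun s x => (1 + s)⁻¹ - (x + s)⁻¹)
      (fun k => Real.integrableOn_inv_add_sub_inv_add one_pos (hA.eigenvalues_pos k)),
    mlog, cfc_congr hlog]

/-- If `t ↦ σ t` is a C¹ curve of positive definite matrices (given entrywise by having
derivative `σ' t` with `σ'` continuous), then `d/dt log σ_t = T_{σ_t}(σ̇_t)` (entrywise). -/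
theorem hasDerivAt_mlog {n : ℕ} (σ σ' : ℝ → Matrix (Fin n) (Fin n) ℂ)
    (hderiv : ∀ t (i j : Fin n), HasDerivAt (fun u => σ u i j) (σ' t i j) t)
    (hcont : ∀ i j : Fin n, Continuous fun t => σ' t i j)
    (hpos : ∀ t, (σ t).PosDef) :
    ∀ t (i j : Fin n),
      HasDerivAt (fun u => mlog (σ u) i j) ((Tmap (σ t) (σ' t)) i j) t := by
  intro t i j
  have hσ (u : ℝ) : HasDerivAt σ (σ' u) u := hasDerivAt_iff_forall_hasDerivAt_apply.2 (hderiv u)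
  simp only [fun u => (hpos u).mlog_apply_eq_integral i j]
  exact hasDerivAt_integral_logIntegrand_apply (.of_forall hσ)
    (continuous_matrix hcont).continuousAt (.of_forall hpos) i j
end

section
/- Under the hypotheses of the mean-field Lindblad equation with faithful initial state m_0, one has sup_{0≤t≤T} ‖log m_t‖ ≤ −log λ_min(m_0) + ‖L‖² T. -/
open Matrix Kronecker
open scoped ComplexOrder

/-- Partial trace over the second tensor factor, `tr₂(A ⊗ B) = tr(B)·A`. -/
noncomputable def ptrace2 {n : ℕ} (M : Matrix (Fin n × Fin n) (Fin n × Fin n) ℂ) :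
    Matrix (Fin n) (Fin n) ℂ :=
  Matrix.of fun i j => ∑ k : Fin n, M (i, k) (j, k)

/-- The mean-field interaction `A^σ = tr₂((1⊗σ)A)`. -/
noncomputable def meanField {n : ℕ} (A : Matrix (Fin n × Fin n) (Fin n × Fin n) ℂ)
    (σ : Matrix (Fin n) (Fin n) ℂ) : Matrix (Fin n) (Fin n) ℂ :=
  ptrace2 (((1 : Matrix (Fin n) (Fin n) ℂ) ⊗ₖ σ) * A)

/-- Right-hand side of the mean-field Lindblad equation
`−i[H̃ + A^m, m] + L m L† − (1/2){L†L, m}`. -/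
noncomputable def lindRHS {n : ℕ} (H L : Matrix (Fin n) (Fin n) ℂ)
    (A : Matrix (Fin n × Fin n) (Fin n × Fin n) ℂ)
    (m : Matrix (Fin n) (Fin n) ℂ) : Matrix (Fin n) (Fin n) ℂ :=
  (-Complex.I) • ((H + meanField A m) * m - m * (H + meanField A m))
    + L * m * Lᴴ - (1 / 2 : ℂ) • (Lᴴ * L * m + m * (Lᴴ * L))

/-- The smallest eigenvalue of a Hermitian matrix (junk value `0` otherwise). -/
noncomputable def lamMin {n : ℕ} (M : Matrix (Fin n) (Fin n) ℂ) : ℝ :=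
  if h : M.IsHermitian then ⨅ i, h.eigenvalues i else 0

/-- The operator norm (2→2 norm) of a matrix. -/
noncomputable def opNorm {m : Type*} [Fintype m] [DecidableEq m] (M : Matrix m m ℂ) : ℝ :=
  ‖Matrix.toEuclideanCLM (𝕜 := ℂ) M‖

/-!
A Rayleigh-quotient barrier argument. If `v` is a unit eigenvector of `m` for `λ = λ_min(m)` and
`m ≥ 0`, the Hamiltonian part of the generator does not contribute to `⟨v, ṁ v⟩`, the jump term
`⟨L†v, m L†v⟩` is nonnegative, and the anticommutator contributes `-λ ‖L v‖² ≥ -‖L‖² λ`. Hence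
`λ_min(m_t)` cannot cross a barrier decaying strictly faster than `e^{-‖L‖² t}`, so
`λ_min(m_t) ≥ λ_min(m_0) e^{-‖L‖² t} > 0`. As `tr m_t = 1`, the spectrum of `m_t` lies in
`[λ_min(m_t), 1]`, and so `‖log m_t‖ ≤ -log λ_min(m_t) ≤ -log λ_min(m_0) + ‖L‖² t`.
-/

open Set Filter Topology
-- With the L² operator norm, `‖M‖` is definitionally `opNorm M`, and matrices form a C⋆-algebra
-- whose order is the Loewner order.
open scoped Matrix.Norms.L2Operator MatrixOrder

section MatrixQuadraticForm

variable {ι 𝕜 : Type*} [Fintype ι] [RCLike 𝕜]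

lemma Matrix.dotProduct_mulVec_le_of_le {A B : Matrix ι ι 𝕜} (h : A ≤ B) (x : ι → 𝕜) :
    star x ⬝ᵥ (A *ᵥ x) ≤ star x ⬝ᵥ (B *ᵥ x) := by
  simpa [sub_mulVec, dotProduct_sub, sub_nonneg] using
    (Matrix.le_iff.1 h).dotProduct_mulVec_nonneg x

variable {M B : Matrix ι ι 𝕜} {v : ι → 𝕜} {r : ℝ}

lemma Matrix.star_dotProduct_mul_mulVec_of_eigenvector (hv : M *ᵥ v = (r : 𝕜) • v) :
    star v ⬝ᵥ ((B * M) *ᵥ v) = r * (star v ⬝ᵥ (B *ᵥ v)) := by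
  rw [← mulVec_mulVec, hv, mulVec_smul, dotProduct_smul, smul_eq_mul]

lemma Matrix.IsHermitian.star_dotProduct_mul_mulVec_of_eigenvector (hM : M.IsHermitian)
    (hv : M *ᵥ v = (r : 𝕜) • v) : star v ⬝ᵥ ((M * B) *ᵥ v) = r * (star v ⬝ᵥ (B *ᵥ v)) := by
  rw [← mulVec_mulVec, dotProduct_mulVec, ← hM.eq, ← star_mulVec, hv, star_smul,
    smul_dotProduct, RCLike.star_def, RCLike.conj_ofReal, smul_eq_mul]

lemma hasDerivAt_dotProduct_mulVec {m : ℝ → Matrix ι ι 𝕜} {D : Matrix ι ι 𝕜} {t : ℝ}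
    (hm : ∀ i j, HasDerivAt (fun u => m u i j) (D i j) t) (v w : ι → 𝕜) :
    HasDerivAt (fun u => v ⬝ᵥ (m u *ᵥ w)) (v ⬝ᵥ (D *ᵥ w)) t := by
  simp only [dotProduct, mulVec, Finset.mul_sum]
  exact HasDerivAt.fun_sum fun i _ => HasDerivAt.fun_sum fun j _ =>
    ((hm i j).mul_const (w j)).const_mul (v i)

end MatrixQuadraticForm

lemma HasDerivAt.nonpos_of_forall_Ico_le {g : ℝ → ℝ} {d a t : ℝ} (hg : HasDerivAt g d t)
    (hat : a < t) (h : ∀ s ∈ Ico a t, g t ≤ g s) : d ≤ 0 := by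
  refine le_of_tendsto (hg.tendsto_slope.mono_left (nhdsLT_le_nhdsNE t)) ?_
  filter_upwards [Ioo_mem_nhdsLT hat] with s hs
  rw [slope_def_field]
  exact div_nonpos_of_nonneg_of_nonpos (sub_nonneg.2 (h s ⟨hs.1.le, hs.2⟩)) (sub_nonpos.2 hs.2.le)

lemma ContinuousOn.exists_first_zero {F : ℝ → ℝ} {a b : ℝ} (hab : a ≤ b)
    (hF : ContinuousOn F (Icc a b)) (ha : 0 < F a) (hb : F b ≤ 0) :
    ∃ c ∈ Ioc a b, F c = 0 ∧ ∀ s ∈ Ico a c, 0 < F s := by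
  set Z := Icc a b ∩ F ⁻¹' Iic 0
  have hbdd : BddBelow Z := ⟨a, fun s hs => hs.1.1⟩
  have hcZ : sInf Z ∈ Z := (hF.preimage_isClosed_of_isClosed isClosed_Icc isClosed_Iic).csInf_mem
    ⟨b, ⟨hab, le_rfl⟩, hb⟩ hbdd
  set c := sInf Z
  have hac : a < c := hcZ.1.1.lt_of_ne fun h => (h ▸ hcZ.2 : F a ≤ 0).not_gt ha
  have hbefore : ∀ s ∈ Ico a c, 0 < F s := fun s hs => not_le.1 fun hFs =>
    (csInf_le hbdd ⟨⟨hs.1, hs.2.le.trans hcZ.1.2⟩, hFs⟩).not_gt hs.2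
  refine ⟨c, ⟨hac, hcZ.1.2⟩, ?_, hbefore⟩
  -- by the intermediate value theorem `F` vanishes somewhere in `[a, c]`, necessarily at `c`
  obtain ⟨s, hs, hFs⟩ := intermediate_value_Icc' hac.le (hF.mono (Icc_subset_Icc le_rfl hcZ.1.2))
    ⟨hcZ.2, ha.le⟩
  have hcs : c ≤ s := csInf_le hbdd ⟨⟨hs.1, hs.2.trans hcZ.1.2⟩, hFs.le⟩
  rwa [le_antisymm hs.2 hcs] at hFs

section SmallestEigenvalue

variable {n : ℕ} {M N : Matrix (Fin n) (Fin n) ℂ}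

lemma Matrix.IsHermitian.lamMin_le_eigenvalues (hM : M.IsHermitian) (i : Fin n) :
    lamMin M ≤ hM.eigenvalues i := by
  rw [lamMin, dif_pos hM]
  exact ciInf_le (Finite.bddBelow_range _) i

lemma Matrix.PosSemidef.eigenvalues_le_one_of_trace_eq_one (hM : M.PosSemidef)
    (htr : M.trace = 1) (i : Fin n) : hM.isHermitian.eigenvalues i ≤ 1 := by
  have hsum : ∑ j, hM.isHermitian.eigenvalues j = 1 := by
    apply RCLike.ofReal_injective (K := ℂ)
    rw [RCLike.ofReal_sum, ← hM.isHermitian.trace_eq_sum_eigenvalues, htr, RCLike.ofReal_one]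
  exact hsum ▸ Finset.single_le_sum (fun j _ => hM.eigenvalues_nonneg j) (Finset.mem_univ i)

variable [NeZero n]

lemma Matrix.IsHermitian.exists_eigenvalues_eq_lamMin (hM : M.IsHermitian) :
    ∃ i, hM.eigenvalues i = lamMin M := by
  obtain ⟨i, hi⟩ := Finite.exists_min hM.eigenvalues
  refine ⟨i, ?_⟩
  rw [lamMin, dif_pos hM]
  exact le_antisymm (le_ciInf hi) (ciInf_le (Finite.bddBelow_range _) i)

lemma Matrix.IsHermitian.le_lamMin_iff (hM : M.IsHermitian) {r : ℝ} :
    r ≤ lamMin M ↔ algebraMap ℝ _ r ≤ M := by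
  rw [algebraMap_le_iff_le_spectrum hM.isSelfAdjoint, hM.spectrum_real_eq_range_eigenvalues,
    Set.forall_mem_range, lamMin, dif_pos hM, le_ciInf_iff (Finite.bddBelow_range _)]

lemma Matrix.IsHermitian.algebraMap_lamMin_le (hM : M.IsHermitian) :
    algebraMap ℝ _ (lamMin M) ≤ M :=
  hM.le_lamMin_iff.1 le_rfl

lemma Matrix.IsHermitian.posSemidef_of_lamMin_nonneg (hM : M.IsHermitian) (h : 0 ≤ lamMin M) :
    M.PosSemidef :=
  Matrix.nonneg_iff_posSemidef.1 (by simpa using hM.le_lamMin_iff.1 h)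

lemma Matrix.PosDef.lamMin_pos (hM : M.PosDef) : 0 < lamMin M := by
  obtain ⟨i, hi⟩ := hM.isHermitian.exists_eigenvalues_eq_lamMin
  exact hi ▸ hM.eigenvalues_pos i

lemma Matrix.IsHermitian.lamMin_le_re_dotProduct_mulVec (hM : M.IsHermitian) {v : Fin n → ℂ}
    (hv : star v ⬝ᵥ v = 1) : lamMin M ≤ (star v ⬝ᵥ (M *ᵥ v)).re := by
  simpa [Algebra.algebraMap_eq_smul_one, smul_mulVec, hv] using
    Complex.re_le_re (dotProduct_mulVec_le_of_le hM.algebraMap_lamMin_le v)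

lemma Matrix.IsHermitian.exists_mulVec_eq_lamMin_smul (hM : M.IsHermitian) :
    ∃ v : Fin n → ℂ, star v ⬝ᵥ v = 1 ∧ M *ᵥ v = (lamMin M : ℂ) • v := by
  obtain ⟨i, hi⟩ := hM.exists_eigenvalues_eq_lamMin
  refine ⟨hM.eigenvectorBasis i, ?_, ?_⟩
  · rw [dotProduct_comm]
    exact inner_self_eq_one_of_norm_eq_one (hM.eigenvectorBasis.orthonormal.1 i)
  · rw [hM.mulVec_eigenvectorBasis, hi, RCLike.real_smul_eq_coe_smul (K := ℂ)]
    rfl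

lemma Matrix.IsHermitian.lamMin_le_add_norm_sub (hM : M.IsHermitian) (hN : N.IsHermitian) :
    lamMin M ≤ lamMin N + ‖M - N‖ := by
  rw [← sub_le_iff_le_add, hN.le_lamMin_iff]
  calc algebraMap ℝ _ (lamMin M - ‖M - N‖)
      = algebraMap ℝ _ (lamMin M) - algebraMap ℝ _ ‖M - N‖ := map_sub _ _ _
    _ ≤ M - (M - N) :=
        sub_le_sub hM.algebraMap_lamMin_le (hM.sub hN).isSelfAdjoint.le_algebraMap_norm_self
    _ = N := sub_sub_cancel M N

lemma lipschitzOnWith_lamMin :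
    LipschitzOnWith 1 lamMin {M : Matrix (Fin n) (Fin n) ℂ | M.IsHermitian} :=
  LipschitzOnWith.of_le_add fun _ hM _ hN => by
    simpa only [dist_eq_norm] using hM.lamMin_le_add_norm_sub hN

lemma ContinuousOn.lamMin {X : Type*} [TopologicalSpace X] {f : X → Matrix (Fin n) (Fin n) ℂ}
    {s : Set X} (hf : ContinuousOn f s) (hherm : ∀ x ∈ s, (f x).IsHermitian) :
    ContinuousOn (fun x => lamMin (f x)) s :=
  lipschitzOnWith_lamMin.continuousOn.comp hf hherm

lemma norm_mlog_le_neg_log_lamMin (hM : M.IsHermitian) (hpos : 0 < lamMin M)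
    (htr : M.trace = 1) : ‖mlog M‖ ≤ -Real.log (lamMin M) := by
  have hpsd := hM.posSemidef_of_lamMin_nonneg hpos.le
  have hbounds : ∀ i, lamMin M ≤ hM.eigenvalues i ∧ hM.eigenvalues i ≤ 1 := fun i =>
    ⟨hM.lamMin_le_eigenvalues i, hpsd.eigenvalues_le_one_of_trace_eq_one htr i⟩
  obtain ⟨i₀, hi₀⟩ := hM.exists_eigenvalues_eq_lamMin
  refine norm_cfc_le (neg_nonneg.2 (Real.log_nonpos hpos.le (hi₀ ▸ (hbounds i₀).2))) ?_
  rw [hM.spectrum_real_eq_range_eigenvalues]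
  rintro _ ⟨i, rfl⟩
  have hi := hbounds i
  rw [Real.norm_eq_abs, abs_of_nonpos (Real.log_nonpos (hpos.trans_le hi.1).le hi.2),
    neg_le_neg_iff]
  exact Real.log_le_log hpos hi.1

end SmallestEigenvalue

section LindbladGenerator

variable {n : ℕ} (H L : Matrix (Fin n) (Fin n) ℂ) (A : Matrix (Fin n × Fin n) (Fin n × Fin n) ℂ)
  {M : Matrix (Fin n) (Fin n) ℂ} {v : Fin n → ℂ} {r : ℝ}

lemma star_dotProduct_lindRHS_mulVec_of_eigenvector (hM : M.IsHermitian)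
    (hv : M *ᵥ v = (r : ℂ) • v) :
    star v ⬝ᵥ (lindRHS H L A M *ᵥ v) =
      star v ⬝ᵥ ((L * M * Lᴴ) *ᵥ v) - r * (star v ⬝ᵥ ((Lᴴ * L) *ᵥ v)) := by
  simp only [lindRHS, sub_mulVec, add_mulVec, smul_mulVec, dotProduct_sub, dotProduct_add,
    dotProduct_smul, star_dotProduct_mul_mulVec_of_eigenvector hv,
    hM.star_dotProduct_mul_mulVec_of_eigenvector hv, smul_eq_mul,
    RCLike.ofReal_eq_complex_ofReal]
  ring

lemma neg_mul_le_re_star_dotProduct_lindRHS_mulVec (hM : M.PosSemidef) (hr : 0 ≤ r)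
    (hv : M *ᵥ v = (r : ℂ) • v) (hv1 : star v ⬝ᵥ v = 1) :
    -(r * ‖L‖ ^ 2) ≤ (star v ⬝ᵥ (lindRHS H L A M *ᵥ v)).re := by
  have hjump : 0 ≤ (star v ⬝ᵥ ((L * M * Lᴴ) *ᵥ v)).re :=
    Complex.re_le_re ((hM.mul_mul_conjTranspose_same L).dotProduct_mulVec_nonneg v)
  have hloss : (star v ⬝ᵥ ((Lᴴ * L) *ᵥ v)).re ≤ ‖L‖ ^ 2 := by
    simpa [Algebra.algebraMap_eq_smul_one, smul_mulVec, hv1, star_eq_conjTranspose,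
      -Complex.ofReal_pow] using Complex.re_le_re
      (dotProduct_mulVec_le_of_le (CStarAlgebra.star_mul_le_algebraMap_norm_sq (a := L)) v)
  rw [star_dotProduct_lindRHS_mulVec_of_eigenvector H L A hM.isHermitian hv, Complex.sub_re,
    Complex.re_ofReal_mul]
  nlinarith [mul_le_mul_of_nonneg_left hloss hr]

end LindbladGenerator

section MeanFieldLindblad

variable {n : ℕ} [NeZero n] {H L : Matrix (Fin n) (Fin n) ℂ}
  {A : Matrix (Fin n × Fin n) (Fin n × Fin n) ℂ} {m : ℝ → Matrix (Fin n) (Fin n) ℂ} {T : ℝ}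

lemma neg_mul_le_of_lamMin_touch {φ : ℝ → ℝ} {φ' a t : ℝ}
    (hm : ∀ i j, HasDerivAt (fun u => m u i j) (lindRHS H L A (m t) i j) t)
    (hherm : ∀ s ∈ Icc a t, (m s).IsHermitian) (hat : a < t) (hφ : HasDerivAt φ φ' t)
    (hφt : 0 ≤ φ t) (htouch : lamMin (m t) = φ t)
    (hbefore : ∀ s ∈ Ico a t, φ s ≤ lamMin (m s)) :
    -(‖L‖ ^ 2 * φ t) ≤ φ' := by
  have hMt := hherm t ⟨hat.le, le_rfl⟩
  obtain ⟨v, hv1, hv⟩ := hMt.exists_mulVec_eq_lamMin_smul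
  set q : ℝ → ℝ := fun u => (star v ⬝ᵥ (m u *ᵥ v)).re
  have hq : HasDerivAt q (star v ⬝ᵥ (lindRHS H L A (m t) *ᵥ v)).re t :=
    Complex.reCLM.hasFDerivAt.comp_hasDerivAt t (hasDerivAt_dotProduct_mulVec hm (star v) v)
  have hqt : q t = φ t := by simp [q, hv, hv1, htouch]
  have hle : ∀ s ∈ Ico a t, q t - φ t ≤ q s - φ s := fun s hs => by
    linarith [(hherm s ⟨hs.1, hs.2.le⟩).lamMin_le_re_dotProduct_mulVec hv1, hbefore s hs]
  have hrhs := neg_mul_le_re_star_dotProduct_lindRHS_mulVec H L A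
    (hMt.posSemidef_of_lamMin_nonneg (htouch ▸ hφt)) (htouch ▸ hφt) hv hv1
  rw [htouch] at hrhs
  linarith [(hq.sub hφ).nonpos_of_forall_Ico_le hat hle]

lemma lt_lamMin_of_barrier {φ φ' : ℝ → ℝ}
    (hderiv : ∀ t ∈ Icc 0 T, ∀ i j, HasDerivAt (fun u => m u i j) (lindRHS H L A (m t) i j) t)
    (hherm : ∀ t ∈ Icc 0 T, (m t).IsHermitian) (hφ : ∀ t ∈ Icc 0 T, HasDerivAt φ (φ' t) t)
    (hφpos : ∀ t ∈ Icc 0 T, 0 ≤ φ t) (hφ' : ∀ t ∈ Icc 0 T, φ' t < -(‖L‖ ^ 2 * φ t))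
    (h0 : φ 0 < lamMin (m 0)) : ∀ t ∈ Icc 0 T, φ t < lamMin (m t) := by
  intro t ht
  by_contra! hle
  have hcont : ContinuousOn (fun s => lamMin (m s) - φ s) (Icc 0 T) :=
    (ContinuousOn.lamMin (fun s hs => (continuousAt_pi.2 fun i => continuousAt_pi.2 fun j =>
      (hderiv s hs i j).continuousAt).continuousWithinAt) hherm).sub
      fun s hs => (hφ s hs).continuousAt.continuousWithinAt
  obtain ⟨t₁, ht₁, htouch, hbefore⟩ := (hcont.mono (Icc_subset_Icc_right ht.2)).exists_first_zero
    ht.1 (sub_pos.2 h0) (sub_nonpos.2 hle)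
  have ht₁T : t₁ ∈ Icc 0 T := ⟨ht₁.1.le, ht₁.2.trans ht.2⟩
  exact (hφ' t₁ ht₁T).not_ge <| neg_mul_le_of_lamMin_touch (hderiv t₁ ht₁T)
    (fun s hs => hherm s ⟨hs.1, hs.2.trans ht₁T.2⟩) ht₁.1 (hφ t₁ ht₁T) (hφpos t₁ ht₁T)
    (sub_eq_zero.1 htouch) fun s hs => (sub_pos.1 (hbefore s hs)).le

lemma lamMin_mul_exp_le_lamMin
    (hderiv : ∀ t ∈ Icc 0 T, ∀ i j, HasDerivAt (fun u => m u i j) (lindRHS H L A (m t) i j) t)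
    (hherm : ∀ t ∈ Icc 0 T, (m t).IsHermitian) (h0 : 0 < lamMin (m 0)) :
    ∀ t ∈ Icc 0 T, lamMin (m 0) * Real.exp (-(‖L‖ ^ 2 * t)) ≤ lamMin (m t) := by
  intro t ht
  set c := ‖L‖ ^ 2
  -- `ε > 0` makes the barrier strict: it starts below `λ_min(m 0)` and decays faster than
  -- `e^{-c s}`; then `ε → 0`.
  set φ : ℝ → ℝ → ℝ := fun ε s => (lamMin (m 0) - ε) * Real.exp (-(c + ε) * s)
  have hbarrier : ∀ ε ∈ Ioo 0 (lamMin (m 0)), φ ε t < lamMin (m t) := fun ε hε => by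
    have hφpos : ∀ s, 0 < φ ε s := fun s => mul_pos (sub_pos.2 hε.2) (Real.exp_pos _)
    refine lt_lamMin_of_barrier (φ' := fun s => -(c + ε) * φ ε s) hderiv hherm
      (fun s _ => ?_) (fun s _ => (hφpos s).le) (fun s _ => by nlinarith [hφpos s, hε.1])
      (by simpa [φ] using hε.1) t ht
    have hlin : HasDerivAt (fun s => -(c + ε) * s) (-(c + ε)) s := by
      simpa using (hasDerivAt_id s).const_mul (-(c + ε))
    exact (hlin.exp.const_mul _).congr_deriv (by simp only [φ]; ring)
  have hlim : Tendsto (fun ε => φ ε t) (𝓝[>] 0) (𝓝 (lamMin (m 0) * Real.exp (-(c * t)))) := by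
    have hcont : Continuous fun ε => φ ε t := by fun_prop
    simpa [φ] using (hcont.tendsto 0).mono_left nhdsWithin_le_nhds
  refine le_of_tendsto hlim ?_
  filter_upwards [Ioo_mem_nhdsGT h0] with ε hε using (hbarrier ε hε).le

end MeanFieldLindblad

theorem lindblad_log_bound_general {n : ℕ} (hn : 0 < n) (T : ℝ)
    (H L : Matrix (Fin n) (Fin n) ℂ)
    (A : Matrix (Fin n × Fin n) (Fin n × Fin n) ℂ)
    (m : ℝ → Matrix (Fin n) (Fin n) ℂ)
    (hderiv : ∀ t ∈ Set.Icc 0 T, ∀ i j : Fin n,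
      HasDerivAt (fun u => m u i j) ((lindRHS H L A (m t)) i j) t)
    (hherm : ∀ t ∈ Set.Icc 0 T, (m t).IsHermitian)
    (htrace : ∀ t ∈ Set.Icc 0 T, (m t).trace = 1)
    (h0 : (m 0).PosDef) :
    ∀ t ∈ Set.Icc 0 T,
      opNorm (mlog (m t)) ≤ -Real.log (lamMin (m 0)) + (opNorm L) ^ 2 * T := by
  have : NeZero n := ⟨hn.ne'⟩
  intro t ht
  have hpos0 := h0.lamMin_pos
  have hlower := lamMin_mul_exp_le_lamMin hderiv hherm hpos0 t ht
  have hpos : 0 < lamMin (m t) := (mul_pos hpos0 (Real.exp_pos _)).trans_le hlower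
  calc opNorm (mlog (m t)) ≤ -Real.log (lamMin (m t)) :=
        norm_mlog_le_neg_log_lamMin (hherm t ht) hpos (htrace t ht)
    _ ≤ -Real.log (lamMin (m 0) * Real.exp (-(‖L‖ ^ 2 * t))) :=
        neg_le_neg (Real.log_le_log (by positivity) hlower)
    _ = -Real.log (lamMin (m 0)) + ‖L‖ ^ 2 * t := by
        rw [Real.log_mul hpos0.ne' (Real.exp_pos _).ne', Real.log_exp]; ring
    _ ≤ -Real.log (lamMin (m 0)) + opNorm L ^ 2 * T :=
        add_le_add_right (mul_le_mul_of_nonneg_left ht.2 (sq_nonneg _)) _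

/-- Logarithmic bound for the mean-field Lindblad flow with faithful initial state:
`sup_{0≤t≤T} ‖log m_t‖ ≤ −log λ_min(m_0) + ‖L‖² T`. -/
theorem lindblad_log_bound {n : ℕ} (hn : 0 < n) (T : ℝ) (hT : 0 ≤ T)
    (H L : Matrix (Fin n) (Fin n) ℂ) (hH : H.IsHermitian)
    (A : Matrix (Fin n × Fin n) (Fin n × Fin n) ℂ) (hA : A.IsHermitian)
    (m : ℝ → Matrix (Fin n) (Fin n) ℂ)
    (hderiv : ∀ t ∈ Set.Icc 0 T, ∀ i j : Fin n,
      HasDerivAt (fun u => m u i j) ((lindRHS H L A (m t)) i j) t)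
    (hherm : ∀ t ∈ Set.Icc 0 T, (m t).IsHermitian)
    (htrace : ∀ t ∈ Set.Icc 0 T, (m t).trace = 1)
    (h0 : (m 0).PosDef) :
    ∀ t ∈ Set.Icc 0 T,
      opNorm (mlog (m t)) ≤ -Real.log (lamMin (m 0)) + (opNorm L) ^ 2 * T :=
  lindblad_log_bound_general hn T H L A m hderiv hherm htrace h0
end
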